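/- In the Two-component model with α1 = α2 = 1, the copula is C(u,v) = uv/(u + v - uv) for (u,v) ∈ (0,1)^2. -/

import Mathlib

/-!
For `α = 1` the Gamma CDF is `1 - e^{-t}` and the scale `(1 - u)^{-1} - 1` equals `u / (1 - u)`,
so after expanding the product the integrand is a signed sum of four exponentials
`e^{-r w}` with `r ∈ {1, 1/u, 1/v, 1/u + 1/v - 1}`. Each integrates to `1/r`, and the constant
`u + v - 1` cancels everything except `(1/u + 1/v - 1)⁻¹ = uv / (u + v - uv)`.
-/

open MeasureTheory ProbabilityTheory Real Set

namespace ProbabilityTheory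

/-- CDF of the gamma distribution -/
noncomputable
def gammaCDFReal (a r : ℝ) : StieltjesFunction ℝ :=
  cdf (gammaMeasure a r)

lemma gammaCDFReal_one_of_nonneg {r x : ℝ} (hr : 0 < r) (hx : 0 ≤ x) :
    gammaCDFReal 1 r x = 1 - exp (-(r * x)) := by
  rw [gammaCDFReal, ← expMeasure, cdf_expMeasure_eq hr, if_pos hx]

end ProbabilityTheory

lemma integrableOn_exp_neg_mul_Ioi {r : ℝ} (hr : 0 < r) :
    IntegrableOn (fun w : ℝ ↦ exp (-(r * w))) (Ioi 0) := by
  simpa only [neg_mul] using integrableOn_exp_mul_Ioi (neg_neg_of_pos hr) 0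

lemma integral_exp_neg_mul_Ioi {r : ℝ} (hr : 0 < r) :
    ∫ w in Ioi (0 : ℝ), exp (-(r * w)) = r⁻¹ := by
  simp only [← neg_mul]
  rw [integral_exp_mul_Ioi (neg_neg_of_pos hr), mul_zero, exp_zero, neg_div_neg_eq,
    one_div]

lemma integral_one_sub_exp_mul_one_sub_exp_mul_exp_Ioi {a b : ℝ} (ha : -1 < a) (hb : -1 < b)
    (hab : -1 < a + b) :
    ∫ w in Ioi (0 : ℝ), (1 - exp (-(a * w))) * (1 - exp (-(b * w))) * exp (-w)
      = 1 - (1 + a)⁻¹ - (1 + b)⁻¹ + (1 + a + b)⁻¹ := by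
  have h1 := integrableOn_exp_neg_mul_Ioi one_pos
  have ha' := integrableOn_exp_neg_mul_Ioi (show 0 < 1 + a by linarith)
  have hb' := integrableOn_exp_neg_mul_Ioi (show 0 < 1 + b by linarith)
  have hab' := integrableOn_exp_neg_mul_Ioi (show 0 < 1 + a + b by linarith)
  have expand : ∀ w : ℝ, (1 - exp (-(a * w))) * (1 - exp (-(b * w))) * exp (-w)
      = exp (-(1 * w)) - exp (-((1 + a) * w)) - exp (-((1 + b) * w))
        + exp (-((1 + a + b) * w)) := by
    intro w
    simp only [neg_add, add_mul, one_mul, exp_add]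
    ring
  simp only [expand]
  rw [integral_add (by exact (h1.sub ha').sub hb') hab', integral_sub (by exact h1.sub ha') hb',
    integral_sub h1 ha', integral_exp_neg_mul_Ioi one_pos,
    integral_exp_neg_mul_Ioi (show 0 < 1 + a by linarith),
    integral_exp_neg_mul_Ioi (show 0 < 1 + b by linarith),
    integral_exp_neg_mul_Ioi (show 0 < 1 + a + b by linarith), inv_one]

lemma div_rpow_neg_one_sub_one {u : ℝ} (hu0 : u ≠ 0) (hu1 : u ≠ 1) (w : ℝ) :
    w / ((1 - u) ^ (-(1 / (1 : ℝ))) - 1) = (u⁻¹ - 1) * w := by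
  have h1u : 1 - u ≠ 0 := sub_ne_zero.mpr (Ne.symm hu1)
  have hscale : (1 - u)⁻¹ - 1 = u / (1 - u) := by field_simp; ring
  rw [div_one, rpow_neg_one, hscale, div_div_eq_mul_div]
  field_simp

/-- With `α1 = α2 = 1` the Two-component copula is `C(u,v) = uv/(u + v - uv)` on `(0,1)²`. -/
theorem two_component_copula_alpha_one (u v : ℝ) (hu : u ∈ Ioo (0:ℝ) 1)
    (hv : v ∈ Ioo (0:ℝ) 1) :
    u + v - 1 + ∫ w in Ioi (0 : ℝ),
        ProbabilityTheory.gammaCDFReal 1 1 (w / ((1 - u) ^ (-(1 / (1:ℝ))) - 1)) *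
          ProbabilityTheory.gammaCDFReal 1 1 (w / ((1 - v) ^ (-(1 / (1:ℝ))) - 1)) *
            Real.exp (-w)
      = u * v / (u + v - u * v) := by
  obtain ⟨hu0, hu1⟩ := hu
  obtain ⟨hv0, hv1⟩ := hv
  have hcdf : ∀ t ∈ Ioo (0 : ℝ) 1, ∀ w ∈ Ioi (0 : ℝ),
      gammaCDFReal 1 1 (w / ((1 - t) ^ (-(1 / (1:ℝ))) - 1)) = 1 - exp (-((t⁻¹ - 1) * w)) := by
    rintro t ⟨ht0, ht1⟩ w hw
    have hscale : 0 ≤ t⁻¹ - 1 := sub_nonneg.mpr (one_le_inv₀ ht0 |>.mpr ht1.le)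
    rw [div_rpow_neg_one_sub_one ht0.ne' ht1.ne,
      gammaCDFReal_one_of_nonneg one_pos (mul_nonneg hscale (le_of_lt hw)), one_mul]
  have hu' : 1 < u⁻¹ := one_lt_inv₀ hu0 |>.mpr hu1
  have hv' : 1 < v⁻¹ := one_lt_inv₀ hv0 |>.mpr hv1
  rw [setIntegral_congr_fun measurableSet_Ioi fun w hw ↦ by
      rw [hcdf u ⟨hu0, hu1⟩ w hw, hcdf v ⟨hv0, hv1⟩ w hw],
    integral_one_sub_exp_mul_one_sub_exp_mul_exp_Ioi (by linarith) (by linarith) (by linarith)]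
  have hden : 0 < u + v - u * v := by nlinarith [mul_pos hv0 (sub_pos.mpr hu1)]
  field_simp
  ring
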